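/- arXiv:0903.5392 — 6 statements merged into one kernel-verified Lean document; each statement's English description precedes it below -/
import Mathlib

section
/- Define threshold functions th(k,n) on boolean vectors of length n by: th(0,n) is identically true; th(k,n) is identically false when k > n; th(1,1)(a) = a; and for n > 1 and 0 < k ≤ n, with p = ⌊n/2⌋ and q = n − p, th(k,n)(a₁,…,aₙ) = ⋁_{i+j=k, 0≤i≤p, 0≤j≤q} (th(i,p)(a₁,…,a_p) ∧ th(j,q)(a_{p+1},…,aₙ)). Then for all k, n and all boolean vectors a of length n, th(k,n)(a) is true if and only if at least k of the inputs a₁,…,aₙ are true. -/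
/-- Recursively defined threshold formulae `th k n` on boolean vectors of length `n`. -/
def th : ℕ → (n : ℕ) → (Fin n → Bool) → Bool
  | 0, _, _ => true
  | k+1, n, a =>
    if h1 : n < k + 1 then false
    else if h2 : n = 1 then a ⟨0, by omega⟩
    else
      (List.range (k + 2)).any fun i =>
        decide (i ≤ n / 2) && decide (k + 1 - i ≤ n - n / 2) &&
        th i (n / 2) (fun x => a ⟨x.1, by omega⟩) &&
        th (k + 1 - i) (n - n / 2) (fun x => a ⟨n / 2 + x.1, by omega⟩)
  termination_by k n => n
  decreasing_by all_goals omega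

/-!
Split the inputs into the first `p` and the last `q`, containing `x ≤ p` and `y ≤ q` true
entries. By induction, the disjunct for `i + j = k` holds iff `i ≤ x` and `j ≤ y`; such a
split exists iff `k ≤ x + y` (take `i = min k x`), and `x + y` is the total count.
-/

open Finset

theorem Fin.card_filter_le_self {n : ℕ} (P : Fin n → Prop) [DecidablePred P] :
    #{i | P i} ≤ n :=
  (card_filter_le _ _).trans_eq (card_fin n)

theorem Fin.card_filter_eq_add {p q n : ℕ} (h : p + q = n) (P : Fin n → Prop)
    [DecidablePred P] :
    #{i | P i} = #{i : Fin p | P ⟨i, by omega⟩} + #{i : Fin q | P ⟨p + i, by omega⟩} := by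
  subst h
  simp only [card_filter, Fin.sum_univ_add]
  rfl

theorem exists_split_le_iff {k p q x y : ℕ} (hx : x ≤ p) (hy : y ≤ q) :
    (∃ i < k + 1, ((i ≤ p ∧ k - i ≤ q) ∧ i ≤ x) ∧ k - i ≤ y) ↔ k ≤ x + y := by
  constructor
  · rintro ⟨i, hik, ⟨-, hix⟩, hiy⟩
    omega
  · intro hk
    exact ⟨min k x, by omega, ⟨⟨by omega, by omega⟩, by omega⟩, by omega⟩

theorem th_correct (k n : ℕ) (a : Fin n → Bool) :
    th k n a = true ↔ k ≤ (Finset.univ.filter (fun i => a i = true)).card := by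
  induction n using Nat.strong_induction_on generalizing k with
  | _ n ih =>
  rcases k with _ | k
  · simp [th]
  rw [th]
  split_ifs with hlt hn
  · have := Fin.card_filter_le_self fun i => a i = true
    simp only [false_iff]
    omega
  · subst hn
    obtain rfl : k = 0 := by omega
    rw [card_filter, Fin.sum_univ_one]
    cases h : a 0 <;> simp [h]
  · rw [Fin.card_filter_eq_add (Nat.add_sub_of_le (Nat.div_le_self n 2)), ← exists_split_le_iff
      (Fin.card_filter_le_self _) (Fin.card_filter_le_self _)]
    simp only [List.any_eq_true, List.mem_range, Bool.and_eq_true, decide_eq_true_eq,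
      ih (n / 2) (by omega), ih (n - n / 2) (by omega)]
end

section
/- With s(k,n) the size of the threshold formula th(k,n) defined recursively (s(0,n) = 1, s(k,n) = 1 for k > n, s(1,1) = 1, and s(k,n) = Σ_{i+j=k, 0≤i≤p, 0≤j≤q} (s(i,p) + s(j,q)) for n > 1, 0 < k ≤ n, p = ⌊n/2⌋, q = n − p), the size s(k,n) is monotone in n for fixed k: s(k,n) ≤ s(k,n+1) for all k and all n > 0. -/
/-!
Strong induction on `n`. When `sz (k+1) n` is a sum (`k < n`, `n ≠ 1`), the sum for `n + 1`
runs over the same indices, every index admissible for `n` stays admissible for `n + 1`, and the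
halves `n / 2` and `n - n / 2` grow by at most one, so the induction hypothesis compares the sums
term by term. In the remaining cases `sz (k+1) n = 1`, and `sz` is positive.
-/

/-- Size of the recursively defined threshold formula `th k n`. -/
def sz : ℕ → ℕ → ℕ
  | 0, _ => 1
  | k+1, n =>
    if h1 : n < k + 1 then 1
    else if h2 : n = 1 then 1
    else
      ∑ i ∈ Finset.range (k + 2),
        if i ≤ n / 2 ∧ k + 1 - i ≤ n - n / 2 then
          sz i (n / 2) + sz (k + 1 - i) (n - n / 2)
        else 0
  termination_by k n => n
  decreasing_by all_goals omega

open Finset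

theorem le_apply_of_le_of_le_succ {α : Type*} [Preorder α] {f : ℕ → α} {a b : ℕ}
    (hab : a ≤ b) (hba : b ≤ a + 1) (hf : f a ≤ f (a + 1)) : f a ≤ f b := by
  obtain rfl | rfl : b = a ∨ b = a + 1 := by omega
  exacts [le_rfl, hf]

namespace sz

theorem zero_left (n : ℕ) : sz 0 n = 1 := by
  rw [sz]

theorem succ_of_lt {k n : ℕ} (h : n < k + 1) : sz (k + 1) n = 1 := by
  rw [sz, dif_pos h]

theorem succ_one (k : ℕ) : sz (k + 1) 1 = 1 := by
  rcases k with _ | k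
  · rw [sz, dif_neg (by omega), dif_pos rfl]
  · exact succ_of_lt (by omega)

theorem succ_eq_sum {k n : ℕ} (hk : k < n) (hn : n ≠ 1) :
    sz (k + 1) n = ∑ i ∈ range (k + 2),
      if i ≤ n / 2 ∧ k + 1 - i ≤ n - n / 2 then
        sz i (n / 2) + sz (k + 1 - i) (n - n / 2)
      else 0 := by
  rw [sz, dif_neg (by omega), dif_neg hn]

theorem pos (k n : ℕ) : 0 < sz k n := by
  induction n using Nat.strong_induction_on generalizing k with
  | _ n ih =>
  rcases k with _ | k
  · simp [zero_left]
  rcases lt_or_ge n (k + 1) with hlt | hle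
  · simp [succ_of_lt hlt]
  rcases eq_or_ne n 1 with rfl | hn
  · simp [succ_one]
  rw [succ_eq_sum (by omega) hn]
  set i₀ := min (k + 1) (n / 2)
  have hi₀ : i₀ ≤ n / 2 ∧ k + 1 - i₀ ≤ n - n / 2 := by omega
  refine lt_of_lt_of_le ?_
    (single_le_sum (fun _ _ => Nat.zero_le _) (mem_range.2 (by omega : i₀ < k + 2)))
  rw [if_pos hi₀]
  exact Nat.add_pos_left (ih _ (by omega) _) _

theorem le_succ (k n : ℕ) : sz k n ≤ sz k (n + 1) := by
  induction n using Nat.strong_induction_on generalizing k with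
  | _ n ih =>
  rcases k with _ | k
  · simp [zero_left]
  rcases lt_or_ge n (k + 1) with hlt | hk
  · rw [succ_of_lt hlt]
    exact pos _ _
  rcases eq_or_ne n 1 with rfl | hn
  · rw [succ_one]
    exact pos _ _
  rw [succ_eq_sum (by omega) hn, succ_eq_sum (by omega) (by omega)]
  refine sum_le_sum fun i _ => ?_
  split_ifs with hadm hadm' hadm'
  · have hlow : sz i (n / 2) ≤ sz i ((n + 1) / 2) :=
      le_apply_of_le_of_le_succ (f := sz i) (by omega) (by omega) (ih _ (by omega) _)
    have hhigh : sz (k + 1 - i) (n - n / 2) ≤ sz (k + 1 - i) (n + 1 - (n + 1) / 2) :=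
      le_apply_of_le_of_le_succ (f := sz _) (by omega) (by omega) (ih _ (by omega) _)
    exact add_le_add hlow hhigh
  · omega
  · exact Nat.zero_le _
  · exact le_rfl

end sz

theorem sz_mono_n_general (k n : ℕ) :
    sz k n ≤ sz k (n + 1) :=
  sz.le_succ k n

theorem sz_mono_n (k n : ℕ) (hn : 0 < n) :
    sz k n ≤ sz k (n + 1) :=
  sz_mono_n_general k n
end

section
/- Let s(k,n) be the size of the threshold formula th(k,n). Then for n > 1, with p = ⌊n/2⌋ and q = n − p, one has s(p+1, n) ≤ 2(q+1) · s(⌊q/2⌋+1, q). -/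
/-!
Let `T m = ∑_{k=1}^m s(k, m)` be the row sums. Summing the defining recurrence over `k` counts every
pair `(i, j)` with `i ≤ p`, `j ≤ q` once, which gives `T n + 2 = (q + 1)(T p + 1) + (p + 1)(T q + 1)`,
while the middle entry is `s(p + 1, n) = T p + T q + n % 2`. These two identities show that `T` is
strictly increasing and that the middle entry is at least the mean of its row,
`T m ≤ (m + 1) s(⌊m/2⌋ + 1, m)`. Hence `s(p + 1, n) ≤ 2 T q ≤ 2 (q + 1) s(⌊q/2⌋ + 1, q)`.
-/

open Finset

def szRowSum (n : ℕ) : ℕ := ∑ k ∈ Icc 1 n, sz k n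

lemma sz_zero_left (n : ℕ) : sz 0 n = 1 := by rw [sz]

lemma sz_eq_sum_antidiagonal {k n : ℕ} (hk : 1 ≤ k) (hkn : k ≤ n) (hn : 2 ≤ n) :
    sz k n = ∑ x ∈ antidiagonal k with x.1 ≤ n / 2 ∧ x.2 ≤ n - n / 2,
      (sz x.1 (n / 2) + sz x.2 (n - n / 2)) := by
  obtain ⟨k, rfl⟩ := Nat.exists_eq_add_of_le' hk
  rw [sz, dif_neg (by omega), dif_neg (by omega), sum_filter,
    Nat.sum_antidiagonal_eq_sum_range_succ_mk]

lemma sum_range_sz (n : ℕ) : ∑ k ∈ range (n + 1), sz k n = szRowSum n + 1 := by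
  rw [Nat.range_succ_eq_Icc_zero, ← insert_Icc_add_one_left_eq_Icc n.zero_le, sum_insert (by simp),
    sz_zero_left, zero_add, szRowSum, add_comm]

lemma szRowSum_add_two {n : ℕ} (hn : 2 ≤ n) :
    szRowSum n + 2 = (n - n / 2 + 1) * (szRowSum (n / 2) + 1)
      + (n / 2 + 1) * (szRowSum (n - n / 2) + 1) := by
  set p := n / 2
  set q := n - n / 2
  have hfiber : ∀ k ∈ range (n + 1), ∑ x ∈ range (p + 1) ×ˢ range (q + 1) with x.1 + x.2 = k,
      (sz x.1 p + sz x.2 q) = if k = 0 then 2 else sz k n := by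
    intro k hk
    split_ifs with hk0
    -- the fibre over `0` is `{(0, 0)}`, worth `sz 0 p + sz 0 q = 2` instead of `sz 0 n = 1`
    · subst hk0
      rw [sum_eq_single_of_mem (0, 0) (by simp), sz_zero_left, sz_zero_left]
      intro x hx hx0
      simp only [mem_filter] at hx
      exact absurd (Prod.ext (by omega) (by omega)) hx0
    · rw [sz_eq_sum_antidiagonal (by omega) (by simpa [Nat.lt_succ_iff] using hk) hn]
      refine sum_congr ?_ fun _ _ => rfl
      ext ⟨i, j⟩
      simp only [mem_filter, HasAntidiagonal.mem_antidiagonal, mem_product, mem_range]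
      omega
  have hmaps : ∀ x ∈ range (p + 1) ×ˢ range (q + 1), x.1 + x.2 ∈ range (n + 1) := by
    intro x hx
    simp only [mem_product, mem_range] at hx ⊢
    omega
  calc szRowSum n + 2 = ∑ k ∈ range (n + 1), if k = 0 then 2 else sz k n := by
        have hrow := sum_range_sz n
        rw [sum_range_succ', sz_zero_left] at hrow
        simp only [sum_range_succ', Nat.add_one_ne_zero, ↓reduceIte]
        omega
    _ = ∑ x ∈ range (p + 1) ×ˢ range (q + 1), (sz x.1 p + sz x.2 q) := by
        rw [← sum_congr rfl hfiber, sum_fiberwise_of_maps_to hmaps]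
    _ = _ := by
        simp only [sum_product, sum_add_distrib, sum_const, card_range, smul_eq_mul, ← mul_sum,
          sum_range_sz]
        ring

lemma sz_half_add_one {n : ℕ} (hn : 2 ≤ n) :
    sz (n / 2 + 1) n = szRowSum (n / 2) + szRowSum (n - n / 2) + n % 2 := by
  rw [sz_eq_sum_antidiagonal (by omega) (by omega) hn, sum_add_distrib]
  set p := n / 2
  set q := n - n / 2
  have hfst : ∑ x ∈ antidiagonal (p + 1) with x.1 ≤ p ∧ x.2 ≤ q, sz x.1 p
      = ∑ i ∈ Icc (p + 1 - q) p, sz i p := by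
    refine sum_nbij' Prod.fst (fun i => (i, p + 1 - i)) ?_ ?_ ?_ ?_ fun _ _ => rfl <;>
      simp +contextual [Prod.ext_iff] <;> omega
  have hsnd : ∑ x ∈ antidiagonal (p + 1) with x.1 ≤ p ∧ x.2 ≤ q, sz x.2 q = szRowSum q := by
    refine sum_nbij' Prod.snd (fun j => (p + 1 - j, j)) ?_ ?_ ?_ ?_ fun _ _ => rfl <;>
      simp +contextual [Prod.ext_iff] <;> omega
  rw [hfst, hsnd]
  rcases Nat.mod_two_eq_zero_or_one n with h | h
  · rw [show p + 1 - q = 1 by omega, h]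
    rfl
  · rw [show p + 1 - q = 0 by omega, h, ← Nat.range_succ_eq_Icc_zero, sum_range_sz]
    ring

lemma szRowSum_one : szRowSum 1 = 1 := by
  simp [szRowSum, sz]

lemma szRowSum_strictMono : StrictMono szRowSum := by
  refine strictMono_nat_of_lt_succ fun n => ?_
  induction n using Nat.strong_induction_on with
  | _ n ih =>
    match n with
    | 0 =>
      rw [szRowSum_one]
      simp [szRowSum]
    | 1 =>
      have h₂ := szRowSum_add_two (n := 1 + 1) le_rfl
      norm_num [szRowSum_one] at h₂ ⊢
      omega
    | n + 2 =>
      have h₁ := szRowSum_add_two (n := n + 2) (by omega)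
      have h₂ := szRowSum_add_two (n := n + 3) (by omega)
      obtain ⟨a, ha | ha⟩ := Nat.even_or_odd' (n + 2)
      · simp only [show (n + 2) / 2 = a by omega, show n + 2 - a = a by omega,
          show (n + 3) / 2 = a by omega, show n + 3 - a = a + 1 by omega] at h₁ h₂
        nlinarith [ih a (by omega)]
      · simp only [show (n + 2) / 2 = a by omega, show n + 2 - a = a + 1 by omega,
          show (n + 3) / 2 = a + 1 by omega, show n + 3 - (a + 1) = a + 1 by omega] at h₁ h₂
        nlinarith [ih a (by omega)]

lemma szRowSum_le_mul_sz_half_add_one (n : ℕ) : szRowSum n ≤ (n + 1) * sz (n / 2 + 1) n := by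
  match n with
  | 0 => simp [szRowSum]
  | 1 => simp [szRowSum_one, sz]
  | n + 2 =>
    rw [sz_half_add_one (by omega)]
    have hrec := szRowSum_add_two (n := n + 2) (by omega)
    set p := (n + 2) / 2
    set q := n + 2 - (n + 2) / 2
    have hp : 1 ≤ szRowSum p := szRowSum_one ▸ szRowSum_strictMono.monotone (by omega)
    have hq : 1 ≤ szRowSum q := szRowSum_one ▸ szRowSum_strictMono.monotone (by omega)
    rw [show n + 2 + 1 = p + q + 1 by omega]
    nlinarith [Nat.mul_le_mul_left p hp, Nat.mul_le_mul_left q hq,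
      Nat.zero_le ((p + q + 1) * ((n + 2) % 2))]

theorem sz_recursive_bound (n : ℕ) (hn : 1 < n) :
    sz (n / 2 + 1) n ≤ 2 * ((n - n / 2) + 1) * sz ((n - n / 2) / 2 + 1) (n - n / 2) := by
  have hrow : szRowSum (n / 2) + n % 2 ≤ szRowSum (n - n / 2) := by
    rcases Nat.mod_two_eq_zero_or_one n with h | h
    · rw [h, add_zero, show n - n / 2 = n / 2 by omega]
    · rw [h, show n - n / 2 = n / 2 + 1 by omega]
      exact szRowSum_strictMono (Nat.lt_succ_self _)
  calc sz (n / 2 + 1) n ≤ 2 * szRowSum (n - n / 2) := by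
        rw [sz_half_add_one hn]
        omega
    _ ≤ 2 * ((n - n / 2 + 1) * sz ((n - n / 2) / 2 + 1) (n - n / 2)) :=
        Nat.mul_le_mul_left 2 (szRowSum_le_mul_sz_half_add_one _)
    _ = _ := by ring
end

section
/- Let h = 2/(log 3 − log 2). Then for every n > 0, s(⌊n/2⌋+1, n) ≤ n^{h·log n}, where s(k,n) is the size of the threshold formula th(k,n) and log is the base-2 logarithm (any fixed base works). Consequently s(⌊n/2⌋+1,n) is n^{O(log n)}, i.e., quasipolynomial in n. -/
/-!
Bound `sz k n` uniformly in `k`: at most `⌊n/2⌋ + 1` summands of the recursion survive, each at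
most twice the bound for the larger half `⌈n/2⌉`, so with `t = ⌈log₂ n⌉` halvings one gets
`sz k n ≤ n ^ (2t)`, the factor `n + 2 ≤ n²` being absorbed at each level. Since `⌈n/2⌉ ≤ 2n/3`,
`(3/2) ^ t ≤ n`, i.e. `t ≤ log n / log (3/2)`.
-/

open Nat

theorem sz_of_le_one {n : ℕ} (hn : n ≤ 1) (k : ℕ) : sz k n = 1 := by
  rcases k with _ | k
  · rw [sz]
  · rw [sz]
    split_ifs <;> omega

theorem sz_le_of_forall_le {n M : ℕ} (hM : ∀ i, sz i (n / 2) ≤ M ∧ sz i (n - n / 2) ≤ M)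
    (k : ℕ) : sz k n ≤ (n / 2 + 1) * (2 * M) := by
  have hM1 : 1 ≤ M := by simpa [sz] using (hM 0).1
  have hpos : 1 ≤ (n / 2 + 1) * (2 * M) := Nat.mul_pos (succ_pos _) (by omega)
  rcases k with _ | k
  · rwa [sz]
  rw [sz]
  split_ifs
  · exact hpos
  · exact hpos
  rw [← Finset.sum_filter]
  set S := (Finset.range (k + 2)).filter fun i => i ≤ n / 2 ∧ k + 1 - i ≤ n - n / 2
  have hS : S ⊆ Finset.range (n / 2 + 1) := fun i hi => by
    simp only [S, Finset.mem_filter, Finset.mem_range] at hi ⊢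
    omega
  calc ∑ i ∈ S, (sz i (n / 2) + sz (k + 1 - i) (n - n / 2)) ≤ ∑ _i ∈ S, 2 * M :=
        Finset.sum_le_sum fun i _ => by linarith [(hM i).1, (hM (k + 1 - i)).2]
    _ = S.card * (2 * M) := by rw [Finset.sum_const, smul_eq_mul]
    _ ≤ (n / 2 + 1) * (2 * M) := by
      gcongr
      simpa using Finset.card_le_card hS

theorem clog_two_of_two_le {n : ℕ} (hn : 2 ≤ n) : clog 2 n = clog 2 (n - n / 2) + 1 := by
  rw [clog_of_two_le one_lt_two hn]
  congr 2
  omega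

theorem monotone_pow_mul_clog (b c : ℕ) : Monotone fun n => n ^ (c * clog b n) := by
  intro m n hmn
  rcases Nat.eq_zero_or_pos n with rfl | hn
  · rw [Nat.le_zero.mp hmn]
  calc m ^ (c * clog b m) ≤ n ^ (c * clog b m) := Nat.pow_le_pow_left hmn _
    _ ≤ n ^ (c * clog b n) :=
      Nat.pow_le_pow_right hn (Nat.mul_le_mul_left _ (clog_mono_right b hmn))

theorem sz_le_pow_clog (n k : ℕ) : sz k n ≤ n ^ (2 * clog 2 n) := by
  induction n using Nat.strong_induction_on generalizing k with
  | _ n ih =>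
  rcases le_or_gt n 1 with hn | hn
  · simp [sz_of_le_one hn, clog_of_right_le_one hn]
  have hp : sz k n ≤ (n / 2 + 1) * (2 * (n - n / 2) ^ (2 * clog 2 (n - n / 2))) :=
    sz_le_of_forall_le (fun i => ⟨(ih _ (by omega) i).trans (monotone_pow_mul_clog 2 2 (by omega)),
      ih _ (by omega) i⟩) k
  calc sz k n ≤ (n / 2 + 1) * 2 * (n - n / 2) ^ (2 * clog 2 (n - n / 2)) := by
        rwa [← mul_assoc] at hp
    _ ≤ n ^ 2 * n ^ (2 * clog 2 (n - n / 2)) :=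
        Nat.mul_le_mul (by nlinarith [Nat.div_mul_le_self n 2]) (Nat.pow_le_pow_left (by omega) _)
    _ = n ^ (2 * clog 2 n) := by rw [clog_two_of_two_le hn, ← pow_add]; ring_nf

theorem three_pow_clog_le {n : ℕ} (hn : 1 ≤ n) : 3 ^ clog 2 n ≤ 2 ^ clog 2 n * n := by
  induction n using Nat.strong_induction_on with
  | _ n ih =>
  rcases hn.eq_or_lt with rfl | hn
  · simp
  rw [clog_two_of_two_le hn]
  have hq := ih (n - n / 2) (by omega) (by omega)
  calc 3 ^ (clog 2 (n - n / 2) + 1) = 3 ^ clog 2 (n - n / 2) * 3 := pow_succ _ _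
    _ ≤ 2 ^ clog 2 (n - n / 2) * (n - n / 2) * 3 := Nat.mul_le_mul_right _ hq
    _ ≤ 2 ^ clog 2 (n - n / 2) * 2 * n := by
      rw [mul_assoc, mul_assoc]
      exact Nat.mul_le_mul_left _ (by omega)
    _ = 2 ^ (clog 2 (n - n / 2) + 1) * n := by rw [pow_succ]

theorem clog_mul_logb_le {n : ℕ} (hn : 1 ≤ n) :
    (clog 2 n : ℝ) * Real.logb 2 (3 / 2) ≤ Real.logb 2 n := by
  have h : ((3 : ℝ) / 2) ^ clog 2 n ≤ n := by
    rw [div_pow, div_le_iff₀ (by positivity)]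
    exact_mod_cast (three_pow_clog_le hn).trans_eq (mul_comm _ _)
  rw [← Real.logb_pow]
  exact Real.logb_le_logb_of_le (by norm_num) (by positivity) h

theorem sz_middle_quasipoly (n : ℕ) (hn : 0 < n) :
    (sz (n / 2 + 1) n : ℝ) ≤
      (n : ℝ) ^ ((2 / (Real.logb 2 3 - Real.logb 2 2)) * Real.logb 2 n) := by
  have hlog : Real.logb 2 3 - Real.logb 2 2 = Real.logb 2 (3 / 2) :=
    (Real.logb_div (by norm_num) (by norm_num)).symm
  have hpos : 0 < Real.logb 2 (3 / 2) := Real.logb_pos one_lt_two (by norm_num)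
  have hexp : ((2 * clog 2 n : ℕ) : ℝ) ≤ 2 / Real.logb 2 (3 / 2) * Real.logb 2 n := by
    rw [div_mul_eq_mul_div, le_div_iff₀ hpos]
    push_cast
    linarith [clog_mul_logb_le hn]
  calc (sz (n / 2 + 1) n : ℝ) ≤ ((n ^ (2 * clog 2 n) : ℕ) : ℝ) :=
        Nat.cast_le.mpr (sz_le_pow_clog n _)
    _ = (n : ℝ) ^ ((2 * clog 2 n : ℕ) : ℝ) := by rw [Nat.cast_pow, Real.rpow_natCast]
    _ ≤ _ := by
      rw [hlog]
      exact Real.rpow_le_rpow_of_exponent_le (by exact_mod_cast hn) hexp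
end

section
/- For every k ≥ 0 and n > 0, the size s(k,n) of the threshold formula th(k,n) satisfies s(k,n) ≤ n^{h·log n} for h = 2/(log 3 − log 2), hence s(k,n) is n^{O(log n)} uniformly in k. -/
/-!
Writing `n ^ (h · log₂ n) = 2 ^ (h · (log₂ n)²)`, the recursion for `sz (k+1) n` is a sum of at
most `n + 1` terms, each at most twice the bound at `⌈n/2⌉`. So it suffices that
`log₂ (2(n+1)) + h (log₂ ⌈n/2⌉)² ≤ h (log₂ n)²`. Since `log₂ n - log₂ ⌈n/2⌉ ≥ log₂ 3 - 1`, the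
right side minus `h (log₂ ⌈n/2⌉)²` is at least `h (log₂ 3 - 1)(log₂ n + log₂ ⌈n/2⌉)`, which for
`h (log₂ 3 - 1) ≥ 2` absorbs `log₂ (2(n+1)) ≤ 2 + log₂ n` once `n ≥ 3`; the case `n = 2` is
checked directly.
-/

open Real

noncomputable def quasipolyBound (h : ℝ) (n : ℕ) : ℝ := (n : ℝ) ^ (h * logb 2 n)

lemma one_lt_logb_two_three : 1 < logb 2 3 := by
  simpa [logb_self_eq_one one_lt_two] using
    logb_lt_logb (b := 2) one_lt_two two_pos (by norm_num : (2 : ℝ) < 3)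

lemma logb_two_three_le : logb 2 3 ≤ 5 / 3 := by
  have := logb_le_logb_of_le one_lt_two (by norm_num) (show (3 : ℝ) ^ 3 ≤ 2 ^ 5 by norm_num)
  simp only [logb_pow, logb_self_eq_one one_lt_two] at this
  push_cast at this
  linarith

lemma quasipolyBound_eq_two_rpow (h : ℝ) {n : ℕ} (hn : 0 < n) :
    quasipolyBound h n = 2 ^ (h * logb 2 n ^ 2) := by
  have hn' : (0 : ℝ) < n := by exact_mod_cast hn
  rw [quasipolyBound, ← rpow_logb two_pos (by norm_num) hn', ← rpow_mul zero_le_two,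
    rpow_logb two_pos (by norm_num) hn']
  ring_nf

section

variable {h : ℝ}

lemma one_le_quasipolyBound (hh : 0 ≤ h) {n : ℕ} (hn : 0 < n) : 1 ≤ quasipolyBound h n := by
  rw [quasipolyBound_eq_two_rpow h hn]
  exact one_le_rpow one_le_two (by positivity)

lemma quasipolyBound_mono (hh : 0 ≤ h) {a b : ℕ} (ha : 0 < a) (hab : a ≤ b) :
    quasipolyBound h a ≤ quasipolyBound h b := by
  rw [quasipolyBound_eq_two_rpow h ha, quasipolyBound_eq_two_rpow h (ha.trans_le hab),
    rpow_le_rpow_left_iff one_lt_two]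
  have ha' : (1 : ℝ) ≤ a := by exact_mod_cast ha
  have hlog : logb 2 a ≤ logb 2 b :=
    logb_le_logb_of_le one_lt_two (by linarith) (by exact_mod_cast hab)
  gcongr
  exact logb_nonneg one_lt_two ha'

lemma nonneg_of_two_div_le (hh : 2 / (logb 2 3 - 1) ≤ h) : 0 ≤ h :=
  (div_nonneg zero_le_two (by linarith [one_lt_logb_two_three])).trans hh

lemma logb_two_mul_succ_add_le (hh : 2 / (logb 2 3 - 1) ≤ h) {n : ℕ} (hn : 2 ≤ n) :
    logb 2 (2 * (n + 1)) + h * logb 2 (n - n / 2 : ℕ) ^ 2 ≤ h * logb 2 n ^ 2 := by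
  have ht := one_lt_logb_two_three
  have hc : 0 < logb 2 3 - 1 := by linarith
  rcases hn.eq_or_lt with rfl | hn3
  · have hbound : 1 + logb 2 3 ≤ 2 / (logb 2 3 - 1) := by
      rw [le_div_iff₀ hc]
      -- `(1 + t)(t - 1) ≤ 2` needs only `t ≤ √3`, and `t ≤ 5/3` suffices
      nlinarith [logb_two_three_le]
    have h6 : logb 2 (2 * ((2 : ℕ) + 1)) = 1 + logb 2 3 := by
      rw [logb_mul two_ne_zero (by norm_num), logb_self_eq_one one_lt_two]
      norm_num
    rw [h6, show (2 - 2 / 2 : ℕ) = 1 from rfl]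
    simp only [Nat.cast_one, logb_one, Nat.cast_ofNat, logb_self_eq_one one_lt_two]
    linarith
  set m := n - n / 2
  have hm0 : (0 : ℝ) < m := by exact_mod_cast (show 0 < m by omega)
  have hn0 : (0 : ℝ) < n := by exact_mod_cast (show 0 < n by omega)
  set x := logb 2 n
  set y := logb 2 m
  have hgap : logb 2 3 - 1 ≤ x - y := by
    have h3m : (3 : ℝ) * m ≤ 2 * n := by exact_mod_cast (show 3 * m ≤ 2 * n by omega)
    have := logb_le_logb_of_le one_lt_two (by positivity) h3m
    rw [logb_mul (by norm_num) hm0.ne', logb_mul two_ne_zero hn0.ne',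
      logb_self_eq_one one_lt_two] at this
    linarith
  have hy : 1 ≤ y := by
    rw [← logb_self_eq_one one_lt_two]
    exact logb_le_logb_of_le one_lt_two two_pos (by exact_mod_cast (show 2 ≤ m by omega))
  have hsucc : logb 2 (2 * (n + 1)) ≤ 2 + x := by
    have h2n : (n : ℝ) + 1 ≤ 2 * n := by
      have : (1 : ℝ) ≤ n := by exact_mod_cast (show 1 ≤ n by omega)
      linarith
    have := logb_le_logb_of_le one_lt_two (by positivity) h2n
    rw [logb_mul two_ne_zero hn0.ne', logb_self_eq_one one_lt_two] at this
    rw [logb_mul two_ne_zero (by positivity), logb_self_eq_one one_lt_two]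
    linarith
  have hh2 : 2 ≤ h * (logb 2 3 - 1) := (div_le_iff₀ hc).mp hh
  have hh0 := nonneg_of_two_div_le hh
  have hsq : h * (logb 2 3 - 1) * (x + y) ≤ h * (x - y) * (x + y) := by
    gcongr
    linarith
  nlinarith [mul_le_mul_of_nonneg_right hh2 (show 0 ≤ x + y by linarith)]

lemma two_mul_succ_mul_quasipolyBound_le (hh : 2 / (logb 2 3 - 1) ≤ h) {n : ℕ} (hn : 2 ≤ n) :
    2 * (n + 1) * quasipolyBound h (n - n / 2) ≤ quasipolyBound h n := by
  have hpos : (0 : ℝ) < 2 * (n + 1) := by positivity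
  rw [quasipolyBound_eq_two_rpow h (by omega), quasipolyBound_eq_two_rpow h (by omega),
    ← rpow_logb two_pos (by norm_num) hpos, ← rpow_add two_pos,
    rpow_le_rpow_left_iff one_lt_two]
  exact logb_two_mul_succ_add_le hh hn

end

lemma sz_succ_le {n k : ℕ} (hn : 2 ≤ n) (hk : k + 1 ≤ n) {B : ℝ}
    (hB : ∀ i, (sz i (n / 2) : ℝ) ≤ B) (hB' : ∀ j, (sz j (n - n / 2) : ℝ) ≤ B) :
    (sz (k + 1) n : ℝ) ≤ (n + 1) * (2 * B) := by
  have hB0 : 0 ≤ B := le_trans (by simp [sz]) (hB 0)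
  rw [sz, dif_neg (by omega), dif_neg (by omega)]
  push_cast
  calc (∑ i ∈ Finset.range (k + 2), if i ≤ n / 2 ∧ k + 1 - i ≤ n - n / 2 then
          (sz i (n / 2) : ℝ) + sz (k + 1 - i) (n - n / 2) else 0)
      ≤ ∑ _i ∈ Finset.range (k + 2), 2 * B := by
        refine Finset.sum_le_sum fun i _ => ?_
        split_ifs
        · linarith [hB i, hB' (k + 1 - i)]
        · linarith
    _ = (k + 2) * (2 * B) := by simp
    _ ≤ (n + 1) * (2 * B) := by
        have : (k : ℝ) + 1 ≤ n := by exact_mod_cast hk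
        gcongr ?_ * _
        linarith

lemma sz_le_quasipolyBound {h : ℝ} (hh : 2 / (logb 2 3 - 1) ≤ h) {n : ℕ} (hn : 0 < n) (k : ℕ) :
    (sz k n : ℝ) ≤ quasipolyBound h n := by
  induction n using Nat.strong_induction_on generalizing k with
  | _ n ih =>
  have hh0 := nonneg_of_two_div_le hh
  rcases k with _ | k
  · simpa [sz] using one_le_quasipolyBound hh0 hn
  by_cases hsmall : n < k + 1 ∨ n = 1
  · have hsz : sz (k + 1) n = 1 := by
      rw [sz]
      split_ifs <;> omega
    simpa [hsz] using one_le_quasipolyBound hh0 hn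
  push Not at hsmall
  calc (sz (k + 1) n : ℝ) ≤ (n + 1) * (2 * quasipolyBound h (n - n / 2)) :=
        sz_succ_le (by omega) (by omega)
          (fun i => (ih _ (by omega) (by omega) i).trans
            (quasipolyBound_mono hh0 (by omega) (by omega)))
          (fun j => ih _ (by omega) (by omega) j)
    _ ≤ quasipolyBound h n := by
        linarith [two_mul_succ_mul_quasipolyBound_le hh (n := n) (by omega)]

theorem sz_quasipoly (k n : ℕ) (hn : 0 < n) :
    (sz k n : ℝ) ≤
      (n : ℝ) ^ ((2 / (Real.logb 2 3 - Real.logb 2 2)) * Real.logb 2 n) :=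
  sz_le_quasipolyBound (by rw [logb_self_eq_one one_lt_two]) hn k
end

section
/- Let h = 2/(log 3 − log 2) (logs base 2) and suppose f : ℕ → ℝ satisfies f(1) ≤ 1 and f(n) ≤ 2(q+1)·f(q) for n ≥ 2 where q = n − ⌊n/2⌋. Then f(n) ≤ n^{h·log n} for all n ≥ 1. -/
/-!
The exponent `h · log₂ n` equals `2 ln n / ln (3/2)`, so the bound is `F n = exp (2 (ln n)² / ln (3/2))`.
Since `q = ⌈n/2⌉` satisfies `(3/2) q ≤ n`, we have `ln q ≤ ln n - ln (3/2)`, and squaring this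
shows that one halving step gains a factor `n²` in `F`, which pays for the factor `2(q+1) ≤ n²`
of the recursion. Strong induction on `n` finishes the proof.
-/

open Real

theorem two_div_logb_sub_mul_logb (x : ℝ) :
    2 / (logb 2 3 - logb 2 2) * logb 2 x = 2 * log x / log (3 / 2) := by
  have h32 : log (3 / 2) ≠ 0 := (log_pos (by norm_num)).ne'
  rw [log_div (by norm_num) (by norm_num)] at h32 ⊢
  simp only [logb]
  field_simp

theorem rpow_mul_rpow_log_div_log_le {k r x y : ℝ} (hk : 0 ≤ k) (hr : 1 < r) (hy : 1 ≤ y)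
    (hyx : r * y ≤ x) : x ^ k * y ^ (k * log y / log r) ≤ x ^ (k * log x / log r) := by
  have hlogr : 0 < log r := log_pos hr
  have hlogy : 0 ≤ log y := log_nonneg hy
  have hlogx : log r + log y ≤ log x := by
    rw [← log_mul (by positivity) (by positivity)]
    exact log_le_log (by nlinarith) hyx
  have hsq : log r * log x ≤ log x ^ 2 - log y ^ 2 := by nlinarith
  rw [rpow_def_of_pos (by nlinarith), rpow_def_of_pos (by positivity),
    rpow_def_of_pos (by nlinarith), ← exp_add, exp_le_exp, ← sub_nonneg]
  have hdiff : log x * (k * log x / log r) - (log x * k + log y * (k * log y / log r))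
      = k * (log x ^ 2 - log y ^ 2 - log r * log x) / log r := by
    field_simp
    ring
  rw [hdiff]
  exact div_nonneg (mul_nonneg hk (by linarith)) hlogr.le

theorem quasipoly_recursion (f : ℕ → ℝ) (hf1 : f 1 ≤ 1)
    (hrec : ∀ n, 2 ≤ n → f n ≤ 2 * ((n - n / 2 : ℕ) + 1) * f (n - n / 2)) :
    ∀ n, 1 ≤ n →
      f n ≤ (n : ℝ) ^ ((2 / (Real.logb 2 3 - Real.logb 2 2)) * Real.logb 2 n) := by
  simp only [two_div_logb_sub_mul_logb]
  intro n hn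
  induction n using Nat.strong_induction_on with
  | _ n ih =>
    obtain rfl | hn2 : n = 1 ∨ 2 ≤ n := by omega
    · simpa using hf1
    set q := n - n / 2
    have hq : 1 ≤ q ∧ q < n ∧ 3 * q ≤ 2 * n := by omega
    have hfactor : 2 * (q + 1) ≤ n ^ 2 := by nlinarith
    have hratio : 3 / 2 * (q : ℝ) ≤ n := by
      have : (3 : ℝ) * q ≤ 2 * n := by exact_mod_cast hq.2.2
      linarith
    calc f n ≤ 2 * ((q : ℝ) + 1) * f q := hrec n hn2
      _ ≤ 2 * ((q : ℝ) + 1) * (q : ℝ) ^ (2 * log q / log (3 / 2)) := by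
        gcongr
        exact ih q hq.2.1 hq.1
      _ ≤ (n : ℝ) ^ (2 : ℝ) * (q : ℝ) ^ (2 * log q / log (3 / 2)) := by
        rw [rpow_two]
        gcongr
        exact_mod_cast hfactor
      _ ≤ (n : ℝ) ^ (2 * log n / log (3 / 2)) :=
        rpow_mul_rpow_log_div_log_le zero_le_two (by norm_num) (by exact_mod_cast hq.1) hratio
end
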